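/- (Craig interpolation for propositional logic) If A and B are propositional formulas such that A → B is valid and A and B share at least one propositional variable, then there exists a formula C whose propositional variables all occur in both A and B, such that A → C and C → B are both valid. -/

import Mathlib

/-- Propositional formulas over variables indexed by naturals. -/
inductive PropForm where
  | var : Nat → PropForm
  | fls : PropForm
  | tru : PropForm
  | neg : PropForm → PropForm
  | conj : PropForm → PropForm → PropForm
  | disj : PropForm → PropForm → PropForm
deriving DecidableEq

/-- Classical Boolean evaluation of a formula under a valuation. -/
def PropForm.eval (v : Nat → Bool) : PropForm → Bool
  | .var n => v n
  | .fls => false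
  | .tru => true
  | .neg A => !(A.eval v)
  | .conj A B => A.eval v && B.eval v
  | .disj A B => A.eval v || B.eval v

/-- The propositional variables occurring in a formula. -/
def PropForm.vars : PropForm → Finset Nat
  | .var n => {n}
  | .fls => ∅
  | .tru => ∅
  | .neg A => A.vars
  | .conj A B => A.vars ∪ B.vars
  | .disj A B => A.vars ∪ B.vars

/-- A formula is valid iff true under every valuation. -/
def PropForm.Valid (A : PropForm) : Prop := ∀ v : Nat → Bool, A.eval v = true

/-- Literals: a variable or its negation. -/
inductive Lit where
  | pos : Nat → Lit
  | neg : Nat → Lit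
deriving DecidableEq

/-- The complement of a literal. -/
def Lit.compl : Lit → Lit
  | .pos n => .neg n
  | .neg n => .pos n

/-- The variable of a literal. -/
def Lit.var : Lit → Nat
  | .pos n => n
  | .neg n => n

/-- Evaluation of a literal. -/
def Lit.eval (v : Nat → Bool) : Lit → Bool
  | .pos n => v n
  | .neg n => !(v n)

/-- A literal as a formula. -/
def Lit.toForm : Lit → PropForm
  | .pos n => .var n
  | .neg n => .neg (.var n)

/-- A clause (finite set of literals read disjunctively) is satisfied by `v`. -/
def clauseSat (v : Nat → Bool) (C : Finset Lit) : Prop := ∃ l ∈ C, l.eval v = true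

/-- A conjunction of literals (finite set read conjunctively) is satisfied by `v`. -/
def cubeSat (v : Nat → Bool) (C : Finset Lit) : Prop := ∀ l ∈ C, l.eval v = true

/-!
The interpolant is `A` with every variable that does not occur in `B` existentially quantified
out, where `∃ x, A` is expressed as `A[⊤/x] ∨ A[⊥/x]`. It follows from `A` and mentions only
shared variables. If it holds at `v`, then `A` holds at some `w` differing from `v` only on
variables absent from `B`, so `B` holds at `w` and hence at `v`.
-/

namespace PropForm

theorem eval_congr (A : PropForm) {v w : Nat → Bool} (h : ∀ n ∈ A.vars, v n = w n) :
    A.eval v = A.eval w := by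
  induction A with
  | var m => exact h m (Finset.mem_singleton_self m)
  | fls | tru => rfl
  | neg A ih => simp only [eval, ih h]
  | conj A B ihA ihB | disj A B ihA ihB =>
    simp only [vars, Finset.mem_union] at h
    simp only [eval, ihA fun n hn => h n (.inl hn), ihB fun n hn => h n (.inr hn)]

def subst (n : Nat) (b : Bool) : PropForm → PropForm
  | .var m => if m = n then (if b then .tru else .fls) else .var m
  | .fls => .fls
  | .tru => .tru
  | .neg A => .neg (A.subst n b)
  | .conj A B => .conj (A.subst n b) (B.subst n b)
  | .disj A B => .disj (A.subst n b) (B.subst n b)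

theorem eval_subst (A : PropForm) (n : Nat) (b : Bool) (v : Nat → Bool) :
    (A.subst n b).eval v = A.eval (Function.update v n b) := by
  induction A with
  | var m =>
    by_cases h : m = n
    · subst h; cases b <;> simp [subst, eval]
    · simp [subst, eval, h]
  | fls | tru => rfl
  | neg A ih => simp only [subst, eval, ih]
  | conj A B ihA ihB | disj A B ihA ihB => simp only [subst, eval, ihA, ihB]

theorem vars_subst (A : PropForm) (n : Nat) (b : Bool) :
    (A.subst n b).vars ⊆ A.vars \ {n} := by
  induction A with
  | var m =>
    by_cases h : m = n
    · subst h; cases b <;> simp [subst, vars]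
    · simp [subst, vars, h]
  | fls | tru => simp [subst, vars]
  | neg A ih => exact ih
  | conj A B ihA ihB | disj A B ihA ihB =>
    simp only [subst, vars, Finset.union_sdiff_distrib]
    exact Finset.union_subset_union ihA ihB

def elimVar (A : PropForm) (n : Nat) : PropForm :=
  .disj (A.subst n true) (A.subst n false)

theorem eval_elimVar (A : PropForm) (n : Nat) (v : Nat → Bool) :
    (A.elimVar n).eval v = true ↔ ∃ b, A.eval (Function.update v n b) = true := by
  simp only [elimVar, eval, eval_subst, Bool.or_eq_true, Bool.exists_bool, or_comm]

theorem vars_elimVar (A : PropForm) (n : Nat) : (A.elimVar n).vars ⊆ A.vars \ {n} :=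
  Finset.union_subset (A.vars_subst n true) (A.vars_subst n false)

def elimVars (A : PropForm) : List Nat → PropForm
  | [] => A
  | n :: ns => (A.elimVar n).elimVars ns

theorem eval_elimVars (A : PropForm) (l : List Nat) (v : Nat → Bool) :
    (A.elimVars l).eval v = true ↔ ∃ w, (∀ m ∉ l, w m = v m) ∧ A.eval w = true := by
  induction l generalizing A with
  | nil => exact ⟨fun h => ⟨v, fun _ _ => rfl, h⟩, fun ⟨w, hwv, hA⟩ => funext (fun m => hwv m List.not_mem_nil) ▸ hA⟩
  | cons n ns ih =>
    simp only [elimVars, ih, eval_elimVar, List.mem_cons, not_or]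
    constructor
    · rintro ⟨w, hwv, b, hA⟩
      refine ⟨Function.update w n b, fun m ⟨hmn, hmns⟩ => ?_, hA⟩
      rw [Function.update_of_ne hmn, hwv m hmns]
    · rintro ⟨w, hwv, hA⟩
      refine ⟨Function.update w n (v n), fun m hmns => ?_, w n, by simpa using hA⟩
      by_cases hmn : m = n
      · rw [hmn, Function.update_self]
      · rw [Function.update_of_ne hmn, hwv m ⟨hmn, hmns⟩]

theorem vars_elimVars (A : PropForm) (l : List Nat) :
    (A.elimVars l).vars ⊆ A.vars \ l.toFinset := by
  induction l generalizing A with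
  | nil => simp [elimVars]
  | cons n ns ih =>
    refine (ih (A.elimVar n)).trans ?_
    rw [List.toFinset_cons, Finset.insert_eq]
    exact (Finset.sdiff_subset_sdiff (A.vars_elimVar n) le_rfl).trans_eq sdiff_sdiff_left

end PropForm

theorem stmt10_general (A B : PropForm)
    (hvalid : ∀ v : Nat → Bool, A.eval v = true → B.eval v = true) :
    ∃ C : PropForm, C.vars ⊆ A.vars ∩ B.vars ∧
      (∀ v : Nat → Bool, A.eval v = true → C.eval v = true) ∧
      (∀ v : Nat → Bool, C.eval v = true → B.eval v = true) := by
  let hidden := (A.vars \ B.vars).toList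
  refine ⟨A.elimVars hidden, ?_, fun v hA => (A.eval_elimVars hidden v).2 ⟨v, fun _ _ => rfl, hA⟩,
    fun v hC => ?_⟩
  · calc (A.elimVars hidden).vars ⊆ A.vars \ hidden.toFinset := A.vars_elimVars hidden
      _ = A.vars ∩ B.vars := by rw [Finset.toList_toFinset, Finset.sdiff_sdiff_self_left]
  · obtain ⟨w, hwv, hA⟩ := (A.eval_elimVars hidden v).1 hC
    rw [← hvalid w hA]
    exact B.eval_congr fun n hn => (hwv n (by simp [hidden, hn])).symm

theorem stmt10 (A B : PropForm)
    (hvalid : ∀ v : Nat → Bool, A.eval v = true → B.eval v = true)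
    (hshared : (A.vars ∩ B.vars).Nonempty) :
    ∃ C : PropForm, C.vars ⊆ A.vars ∩ B.vars ∧
      (∀ v : Nat → Bool, A.eval v = true → C.eval v = true) ∧
      (∀ v : Nat → Bool, C.eval v = true → B.eval v = true) :=
  stmt10_general A B hvalid
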